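/- Let ω > 0. A trade statistics {(P^t, X^t)}_{t=1}^T satisfies HARP(ω) if and only if for every choice of positive real numbers μ^1,…,μ^T the rescaled trade statistics {(P^t, μ^t X^t)}_{t=1}^T satisfies GARP(ω). -/

import Mathlib

open scoped BigOperators

noncomputable section

/-- Euclidean scalar product of two vectors indexed by `ι`. -/
def dotp {ι : Type*} [Fintype ι] (P X : ι → ℝ) : ℝ := ∑ i, P i * X i

/-- `ℝ^ι_+` : the set of nonnegative, nonzero vectors. -/
def Rplus (ι : Type*) [Fintype ι] : Set (ι → ℝ) := {X | 0 ≤ X ∧ X ≠ 0}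

/-- The class `Φ_G` of nonnegative, nonsatiated, continuous, concave, monotone utility
functions on `ℝ^ι_+` which are positive on the interior of `ℝ^ι_+`. -/
structure IsPhiG {ι : Type*} [Fintype ι] (u : (ι → ℝ) → ℝ) : Prop where
  nonneg : ∀ X ∈ Rplus ι, 0 ≤ u X
  cont : ContinuousOn u (Rplus ι)
  concave : ∀ X ∈ Rplus ι, ∀ Y ∈ Rplus ι, ∀ a b : ℝ,
    0 ≤ a → 0 ≤ b → a + b = 1 → a * u X + b * u Y ≤ u (a • X + b • Y)
  mono : ∀ X ∈ Rplus ι, ∀ Y ∈ Rplus ι, X ≤ Y → u X ≤ u Y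
  pos : ∀ X ∈ interior (Rplus ι), 0 < u X
  nonsatiated : ∀ X ∈ Rplus ι, ∀ ε : ℝ, 0 < ε → ∃ Y ∈ Rplus ι, dist Y X < ε ∧ u X < u Y

/-- The class `Φ_H` : functions in `Φ_G` that are positively homogeneous of degree 1. -/
def IsPhiH {ι : Type*} [Fintype ι] (u : (ι → ℝ) → ℝ) : Prop :=
  IsPhiG u ∧ ∀ X ∈ Rplus ι, ∀ α : ℝ, 0 < α → u (α • X) = α * u X

/-- GARP(ω). -/
def GARPw {ι : Type*} [Fintype ι] {T : ℕ} (ω : ℝ) (P X : Fin T → ι → ℝ) : Prop :=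
  ∀ t s : Fin T,
    Relation.TransGen (fun a b => ω * dotp (P a) (X b) ≤ dotp (P a) (X a)) t s →
    dotp (P s) (X s) ≤ ω * dotp (P s) (X t)

/-- HARP(ω): for every cyclic sequence of observations with consecutive indices
distinct, the product of cross expenditures dominates `ω^{-k}` times the product
of own expenditures (`k` being the length of the sequence). -/
def HARPw {ι : Type*} [Fintype ι] {T : ℕ} (ω : ℝ) (P X : Fin T → ι → ℝ) : Prop :=
  ∀ (k : ℕ) (τ : Fin (k + 1) → Fin T),
    (∀ i : Fin k, τ i.castSucc ≠ τ i.succ) →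
    ω⁻¹ ^ (k + 1) * ∏ i, dotp (P (τ i)) (X (τ i)) ≤ ∏ i, dotp (P (τ i)) (X (τ (i + 1)))

open List

section TradeAux
variable {ι : Type*}

/-- Product of `a` along the edges of the path `u :: l`. -/
def pchain (a : ι → ι → ℝ) : ι → List ι → ℝ
  | _, [] => 1
  | u, v :: l => a u v * pchain a v l

/-- Product of the "own" values along a list. -/
def ownL (a : ι → ι → ℝ) (c : List ι) : ℝ := (c.map fun t => a t t).prod

/-- Product of `a` along the cyclic edges of a list. -/
def ccrossL (a : ι → ι → ℝ) : List ι → ℝ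
  | [] => 1
  | h :: l => pchain a h (l ++ [h])

variable {a : ι → ι → ℝ}

lemma pchain_pos (ha : ∀ p q, 0 < a p q) : ∀ (l : List ι) (u : ι), 0 < pchain a u l
  | [], u => one_pos
  | v :: l, u => mul_pos (ha u v) (pchain_pos ha l v)

lemma ownL_pos (ha : ∀ p q, 0 < a p q) : ∀ (c : List ι), 0 < ownL a c
  | [] => one_pos
  | v :: l => by
      have := ownL_pos ha l
      simpa [ownL] using mul_pos (ha v v) this

lemma ccrossL_pos (ha : ∀ p q, 0 < a p q) : ∀ (c : List ι), 0 < ccrossL a c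
  | [] => one_pos
  | v :: l => pchain_pos ha _ _

lemma ownL_cons (v : ι) (l : List ι) : ownL a (v :: l) = a v v * ownL a l := by
  simp [ownL]

lemma ownL_append (l₁ l₂ : List ι) : ownL a (l₁ ++ l₂) = ownL a l₁ * ownL a l₂ := by
  simp [ownL]

lemma pchain_cons_append : ∀ (l₁ : List ι) (u v : ι) (l₂ : List ι),
    pchain a u (l₁ ++ v :: l₂) = pchain a u (l₁ ++ [v]) * pchain a v l₂
  | [], u, v, l₂ => by simp [pchain]
  | w :: l₁, u, v, l₂ => by
      simp only [List.cons_append, pchain, List.append_eq, pchain_cons_append l₁ w v l₂]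
      ring

lemma pchain_concat : ∀ (l : List ι) (u x : ι),
    pchain a u (l ++ [x]) = pchain a u l * a ((u :: l).getLast (by simp)) x
  | [], u, x => by simp [pchain]
  | v :: l, u, x => by
      simp only [List.cons_append, pchain, List.append_eq, pchain_concat l v x]
      rw [List.getLast_cons (by simp : (v :: l) ≠ [])]
      ring
end TradeAux

section Chains
variable {r : ι → ι → Prop} {a : ι → ι → ℝ}

lemma chain_append_single : ∀ (l : List ι) (t s : ι), List.Chain r t l →
    r ((t :: l).getLast (by simp)) s → List.Chain r t (l ++ [s])
  | [], t, s, _, hr => by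
      simpa using List.Chain.cons (by simpa using hr) List.Chain.nil
  | v :: l, t, s, hch, hr => by
      rcases List.chain_cons.1 hch with ⟨htv, hch'⟩
      refine (List.cons_append (a := v) (as := l) (bs := [s])) ▸ List.Chain.cons htv ?_
      exact chain_append_single l v s hch'
        (by rwa [List.getLast_cons (by simp : (v :: l) ≠ [])] at hr)

lemma transGen_exists_chain {t s : ι} (h : Relation.TransGen r t s) :
    ∃ l : List ι, l ≠ [] ∧ List.Chain r t l ∧ (t :: l).getLast (by simp) = s := by
  induction h with
  | single h => exact ⟨[_], by simp, List.Chain.cons h List.Chain.nil, by simp⟩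
  | tail hab hbs ih =>
      rcases ih with ⟨l, hne, hch, hlast⟩
      refine ⟨l ++ [_], by simp, chain_append_single l _ _ hch (hlast ▸ hbs), ?_⟩
      exact List.getLast_concat (l := t :: l)

lemma chain_transGen : ∀ (l : List ι) (t : ι), l ≠ [] → List.Chain r t l →
    Relation.TransGen r t ((t :: l).getLast (by simp))
  | [], t, hne, _ => absurd rfl hne
  | v :: l, t, _, hch => by
      rcases List.chain_cons.1 hch with ⟨htv, hch'⟩
      rw [List.getLast_cons (by simp : (v :: l) ≠ [])]
      rcases eq_or_ne l [] with rfl | hl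
      · simpa using Relation.TransGen.single htv
      · exact (chain_transGen l v hl hch').head htv

/-- Removing consecutive duplicates from an `r`-chain. -/
lemma dedup_chain : ∀ (l : List ι) (t : ι), List.Chain r t l →
    ∃ l' : List ι, List.Chain r t l' ∧ List.Chain' (· ≠ ·) (t :: l') ∧
      (t :: l').getLast (by simp) = (t :: l).getLast (by simp)
  | [], t, _ => ⟨[], List.Chain.nil, List.IsChain.singleton _, rfl⟩
  | v :: l, t, hch => by
      rcases List.chain_cons.1 hch with ⟨htv, hch'⟩
      rcases dedup_chain l v hch' with ⟨l'', hch'', hne'', hlast''⟩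
      rcases eq_or_ne t v with rfl | htv'
      · exact ⟨l'', hch'', hne'', by
          rw [hlast'', List.getLast_cons (by simp : (t :: l) ≠ [])]⟩
      · refine ⟨v :: l'', List.chain_cons.2 ⟨htv, hch''⟩,
          List.isChain_cons_cons.2 ⟨htv', ?_⟩, ?_⟩
        · exact List.isChain_cons.2 ⟨fun y hy => (List.isChain_cons.1 hne'').1 y hy,
            (List.isChain_cons.1 hne'').2⟩
        · rw [List.getLast_cons (by simp : (v :: l'') ≠ []),
            List.getLast_cons (by simp : (v :: l) ≠ [])]
          exact hlast''
end Chains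

section Mu
variable [DecidableEq ι] {a : ι → ι → ℝ} {ω : ℝ} {μ : ι → ℝ}

/-- Product of the chained GARP inequalities along a path. -/
lemma chainprod (hω : 0 < ω) (ha : ∀ p q, 0 < a p q) (hμ : ∀ t, 0 < μ t) :
    ∀ (l : List ι) (t : ι),
      List.Chain (fun p q => ω * (μ q * a p q) ≤ μ p * a p p) t l →
      ω ^ l.length * (μ ((t :: l).getLast (by simp)) * pchain a t l *
        a ((t :: l).getLast (by simp)) ((t :: l).getLast (by simp)))
        ≤ μ t * ownL a (t :: l)
  | [], t, _ => by simp [pchain, ownL]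
  | v :: l, t, hch => by
      rcases List.chain_cons.1 hch with ⟨htv, hch'⟩
      have ih := chainprod hω ha hμ l v hch'
      rw [List.getLast_cons (by simp : (v :: l) ≠ [])]
      set s := (v :: l).getLast (by simp) with hs
      have hpos : (0:ℝ) < ω * a t v := mul_pos hω (ha t v)
      calc ω ^ (v :: l).length * (μ s * pchain a t (v :: l) * a s s)
          = (ω * a t v) * (ω ^ l.length * (μ s * pchain a v l * a s s)) := by
            simp [pchain, pow_succ]; ring
        _ ≤ (ω * a t v) * (μ v * ownL a (v :: l)) :=
            mul_le_mul_of_nonneg_left ih hpos.le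
        _ = (ω * (μ v * a t v)) * ownL a (v :: l) := by ring
        _ ≤ (μ t * a t t) * ownL a (v :: l) :=
            mul_le_mul_of_nonneg_right htv (ownL_pos ha _).le
        _ = μ t * ownL a (t :: v :: l) := by rw [ownL_cons t (v :: l)]; ring

/-- Construction of the scaling factors along a nodup cycle. -/
noncomputable def buildμ (a : ι → ι → ℝ) (ω : ℝ) : ι → ℝ → List ι → ι → ℝ
  | u, x, [] => Function.update (fun _ => 1) u x
  | u, x, v :: l => Function.update (buildμ a ω v (x * a u u / (ω * a u v)) l) u x

lemma buildμ_pos (hω : 0 < ω) (ha : ∀ p q, 0 < a p q) :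
    ∀ (l : List ι) (u : ι) (x : ℝ), 0 < x → ∀ y, 0 < buildμ a ω u x l y
  | [], u, x, hx, y => by
      simp only [buildμ, Function.update_apply]
      split <;> [exact hx; exact one_pos]
  | v :: l, u, x, hx, y => by
      simp only [buildμ, Function.update_apply]
      split
      · exact hx
      · exact buildμ_pos hω ha l v _ (by have h1 := ha u v; have h2 := ha u u; positivity) y

lemma buildμ_self : ∀ (l : List ι) (u : ι) (x : ℝ), buildμ a ω u x l u = x
  | [], u, x => by simp [buildμ]
  | v :: l, u, x => by simp [buildμ]

lemma buildμ_ne {y u : ι} (hyu : y ≠ u) (x : ℝ) (v : ι) (l : List ι) :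
    buildμ a ω u x (v :: l) y = buildμ a ω v (x * a u u / (ω * a u v)) l y := by
  simp [buildμ, Function.update_of_ne hyu]

lemma buildμ_chain (hω : 0 < ω) (ha : ∀ p q, 0 < a p q) :
    ∀ (l : List ι) (u : ι) (x : ℝ) (μ : ι → ℝ), (u :: l).Nodup →
      (∀ y ∈ u :: l, μ y = buildμ a ω u x l y) →
      List.Chain (fun p q => ω * (μ q * a p q) ≤ μ p * a p p) u l
  | [], _, _, _, _, _ => List.Chain.nil
  | v :: l, u, x, μ, hnd, hval => by
      have hvu : v ≠ u := by
        intro h; exact (List.nodup_cons.1 hnd).1 (h ▸ List.mem_cons_self (a := v) (l := l))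
      have hμu : μ u = x := by
        rw [hval u List.mem_cons_self, buildμ_self]
      have hμv : μ v = x * a u u / (ω * a u v) := by
        rw [hval v (by simp), buildμ_ne hvu, buildμ_self]
      refine List.chain_cons.2 ⟨?_, ?_⟩
      · rw [hμu, hμv]
        have h1 : ω * a u v ≠ 0 := ne_of_gt (mul_pos hω (ha u v))
        have : ω * (x * a u u / (ω * a u v) * a u v) = x * a u u := by
          have := (ha u v).ne'; field_simp
        rw [this]
      · refine buildμ_chain hω ha l v (x * a u u / (ω * a u v)) μ (List.nodup_cons.1 hnd).2 ?_
        intro y hy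
        have hyu : y ≠ u := by
          intro h; exact (List.nodup_cons.1 hnd).1 (h ▸ hy)
        rw [hval y (List.mem_cons_of_mem u hy), buildμ_ne hyu]

lemma buildμ_last (hω : 0 < ω) (ha : ∀ p q, 0 < a p q) :
    ∀ (l : List ι) (u : ι) (x : ℝ), (u :: l).Nodup →
      buildμ a ω u x l ((u :: l).getLast (by simp)) *
        (ω ^ l.length * pchain a u l) *
        a ((u :: l).getLast (by simp)) ((u :: l).getLast (by simp))
        = x * ownL a (u :: l)
  | [], u, x, _ => by simp [buildμ_self, pchain, ownL]
  | v :: l, u, x, hnd => by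
      have hs : ((u :: v :: l).getLast (by simp)) = ((v :: l).getLast (by simp)) :=
        List.getLast_cons (by simp)
      have hsv : ((v :: l).getLast (by simp)) ∈ v :: l := List.getLast_mem _
      have hsu : ((v :: l).getLast (by simp)) ≠ u := by
        intro h; exact (List.nodup_cons.1 hnd).1 (h ▸ hsv)
      have ih := buildμ_last hω ha l v (x * a u u / (ω * a u v)) (List.nodup_cons.1 hnd).2
      rw [hs, buildμ_ne hsu]
      set s := (v :: l).getLast (by simp) with hsdef
      have h1 : ω * a u v ≠ 0 := ne_of_gt (mul_pos hω (ha u v))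
      calc buildμ a ω v (x * a u u / (ω * a u v)) l s *
            (ω ^ (v :: l).length * pchain a u (v :: l)) * a s s
          = (ω * a u v) * (buildμ a ω v (x * a u u / (ω * a u v)) l s *
              (ω ^ l.length * pchain a v l) * a s s) := by
            simp [pchain, pow_succ]; ring
        _ = (ω * a u v) * ((x * a u u / (ω * a u v)) * ownL a (v :: l)) := by rw [ih]
        _ = x * ownL a (u :: v :: l) := by
            rw [ownL_cons u (v :: l)]; have := (ha u v).ne'; field_simp
end Mu

section Main
variable [DecidableEq ι] {a : ι → ι → ℝ} {ω : ℝ}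

lemma sub2 : ∀ (c : List ι) (v : ι), [v, v].Sublist c →
    ∃ c₁ c₂ c₃ : List ι, c = c₁ ++ v :: (c₂ ++ v :: c₃)
  | [], v, h => absurd h (by simp)
  | b :: c, v, h => by
      by_cases hbv : b = v
      · subst hbv
        have h' : [b] <+ c := by
          cases h with
          | cons _ h2 => exact (List.sublist_cons_self b [b]).trans h2
          | cons_cons _ h2 => exact h2
        obtain ⟨s, t, rfl⟩ := List.append_of_mem (show b ∈ c from h'.subset (by simp))
        exact ⟨[], s, t, by simp⟩
      · have h' : [v, v].Sublist c := by
          cases h with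
          | cons _ h2 => exact h2
          | cons_cons _ h2 => exact absurd rfl hbv
        obtain ⟨c₁, c₂, c₃, rfl⟩ := sub2 c v h'
        exact ⟨b :: c₁, c₂, c₃, rfl⟩

lemma ccrossL_split (v : ι) (c₁ c₂ c₃ : List ι) :
    ccrossL a (c₁ ++ v :: (c₂ ++ v :: c₃)) =
      ccrossL a (v :: c₂) * ccrossL a (c₁ ++ v :: c₃) := by
  cases c₁ with
  | nil =>
      show pchain a v ((c₂ ++ v :: c₃) ++ [v]) = pchain a v (c₂ ++ [v]) * pchain a v (c₃ ++ [v])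
      rw [show (c₂ ++ v :: c₃) ++ [v] = c₂ ++ v :: (c₃ ++ [v]) by simp,
        pchain_cons_append]
  | cons h c₁' =>
      show pchain a h ((c₁' ++ v :: (c₂ ++ v :: c₃)) ++ [h]) =
        pchain a v (c₂ ++ [v]) * pchain a h ((c₁' ++ v :: c₃) ++ [h])
      rw [show (c₁' ++ v :: (c₂ ++ v :: c₃)) ++ [h] = c₁' ++ v :: (c₂ ++ v :: (c₃ ++ [h])) by simp,
        show (c₁' ++ v :: c₃) ++ [h] = c₁' ++ v :: (c₃ ++ [h]) by simp,
        pchain_cons_append, pchain_cons_append c₁' h v (c₃ ++ [h]),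
        pchain_cons_append c₂ v v (c₃ ++ [h])]
      ring

lemma chain'_of_decomp {v : ι} {c₁ c₂ c₃ : List ι}
    (hch : List.Chain' (· ≠ ·) (c₁ ++ v :: (c₂ ++ v :: c₃))) :
    List.Chain' (· ≠ ·) (v :: c₂) ∧ List.Chain' (· ≠ ·) (c₁ ++ v :: c₃) := by
  obtain ⟨hc₁, hrest, hjunc⟩ := List.isChain_append.1 hch
  obtain ⟨hvhead, hmid⟩ := List.isChain_cons.1 hrest
  obtain ⟨hc₂, hvc₃, hjunc₂⟩ := List.isChain_append.1 hmid
  constructor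
  · refine List.isChain_cons.2 ⟨?_, hc₂⟩
    intro y hy
    apply hvhead
    cases c₂ with
    | nil => simp at hy
    | cons b c => simp at hy; simp [hy]
  · refine List.isChain_append.2 ⟨hc₁, hvc₃, ?_⟩
    intro x hx y hy
    simp only [List.head?_cons, Option.mem_def, Option.some.injEq] at hy
    subst hy
    exact hjunc x hx v (by simp)

lemma harp_of_garp_aux (hω : 0 < ω) (hω1 : 1 ≤ ω) (ha : ∀ p q, 0 < a p q)
    (hG : ∀ μ : ι → ℝ, (∀ t, 0 < μ t) → ∀ t s,
      Relation.TransGen (fun p q => ω * (μ q * a p q) ≤ μ p * a p p) t s →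
        μ s * a s s ≤ ω * (μ t * a s t)) :
    ∀ (n : ℕ) (c : List ι), c.length ≤ n → c ≠ [] → List.Chain' (· ≠ ·) c →
      ω⁻¹ ^ c.length * ownL a c ≤ ccrossL a c := by
  intro n
  induction n with
  | zero => intro c hlen hne _; cases c <;> simp_all
  | succ n ih =>
      intro c hlen hne hch
      by_cases hnd : c.Nodup
      · obtain ⟨h, l, rfl⟩ := List.exists_cons_of_ne_nil hne
        cases l with
        | nil =>
            have hinv : ω⁻¹ ≤ 1 := by
              rw [inv_le_one_iff₀]; right; exact hω1
            have hA := ha h h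
            show ω⁻¹ ^ 1 * ownL a [h] ≤ ccrossL a [h]
            simp only [pow_one, ownL, ccrossL, pchain, List.map_cons, List.map_nil,
              List.prod_cons, List.prod_nil, List.nil_append]
            nlinarith
        | cons v l' =>
            set l : List ι := v :: l' with hl
            set μ : ι → ℝ := buildμ a ω h 1 l with hμdef
            have hμpos : ∀ y, 0 < μ y := buildμ_pos hω ha l h 1 one_pos
            have hchain := buildμ_chain hω ha l h 1 μ hnd (fun y _ => rfl)
            have htg := chain_transGen l h (by simp [hl]) hchain
            set s : ι := (h :: l).getLast (by simp) with hsdef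
            have hg := hG μ hμpos h s htg
            have hμh : μ h = 1 := buildμ_self l h 1
            have hlast := buildμ_last hω ha l h 1 hnd
            rw [hμh, one_mul] at hg
            -- hlast : μ s * (ω ^ l.length * pchain a h l) * a s s = 1 * ownL a (h :: l)
            have hpc : 0 < pchain a h l := pchain_pos ha l h
            have hO : 0 < ownL a (h :: l) := ownL_pos ha _
            have hkey : ownL a (h :: l) ≤ ω ^ (l.length + 1) * (pchain a h l * a s h) := by
              have h2 : μ s * a s s * (ω ^ l.length * pchain a h l)
                  ≤ (ω * a s h) * (ω ^ l.length * pchain a h l) := by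
                apply mul_le_mul_of_nonneg_right hg
                positivity
              calc ownL a (h :: l) = μ s * (ω ^ l.length * pchain a h l) * a s s := by
                    rw [hlast]; ring
                _ = μ s * a s s * (ω ^ l.length * pchain a h l) := by ring
                _ ≤ (ω * a s h) * (ω ^ l.length * pchain a h l) := h2
                _ = ω ^ (l.length + 1) * (pchain a h l * a s h) := by rw [pow_succ]; ring
            have hccr : ccrossL a (h :: l) = pchain a h l * a s h := by
              show pchain a h (l ++ [h]) = _
              rw [pchain_concat]
            rw [hccr]
            calc ω⁻¹ ^ (h :: l).length * ownL a (h :: l)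
                ≤ ω⁻¹ ^ (l.length + 1) * (ω ^ (l.length + 1) * (pchain a h l * a s h)) := by
                  apply mul_le_mul_of_nonneg_left hkey; positivity
              _ = (ω⁻¹ * ω) ^ (l.length + 1) * (pchain a h l * a s h) := by
                  rw [mul_pow]; ring
              _ = pchain a h l * a s h := by
                  rw [inv_mul_cancel₀ (ne_of_gt hω), one_pow, one_mul]
      · obtain ⟨v, hv⟩ := by
          rw [List.nodup_iff_sublist] at hnd; push_neg at hnd; exact hnd
        obtain ⟨c₁, c₂, c₃, rfl⟩ := sub2 _ v hv
        obtain ⟨hch1, hch2⟩ := chain'_of_decomp hch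
        have hlen1 : (v :: c₂).length ≤ n := by
          simp only [List.length_append, List.length_cons] at hlen ⊢; omega
        have hlen2 : (c₁ ++ v :: c₃).length ≤ n := by
          simp only [List.length_append, List.length_cons] at hlen ⊢; omega
        have ih1 := ih (v :: c₂) hlen1 (by simp) hch1
        have ih2 := ih (c₁ ++ v :: c₃) hlen2 (by simp) hch2
        have hlen3 : (c₁ ++ v :: (c₂ ++ v :: c₃)).length
            = (v :: c₂).length + (c₁ ++ v :: c₃).length := by
          simp only [List.length_append, List.length_cons]; omega
        have hown : ownL a (c₁ ++ v :: (c₂ ++ v :: c₃))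
            = ownL a (v :: c₂) * ownL a (c₁ ++ v :: c₃) := by
          simp only [ownL_append, ownL_cons]; ring
        rw [ccrossL_split, hlen3, hown, pow_add]
        have h1 : 0 ≤ ω⁻¹ ^ (c₁ ++ v :: c₃).length * ownL a (c₁ ++ v :: c₃) := by
          have := ownL_pos ha (c₁ ++ v :: c₃); positivity
        calc ω⁻¹ ^ (v :: c₂).length * ω⁻¹ ^ (c₁ ++ v :: c₃).length *
              (ownL a (v :: c₂) * ownL a (c₁ ++ v :: c₃))
            = (ω⁻¹ ^ (v :: c₂).length * ownL a (v :: c₂)) *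
              (ω⁻¹ ^ (c₁ ++ v :: c₃).length * ownL a (c₁ ++ v :: c₃)) := by ring
          _ ≤ ccrossL a (v :: c₂) * ccrossL a (c₁ ++ v :: c₃) :=
              mul_le_mul ih1 ih2 h1 (ccrossL_pos ha _).le

lemma harp_of_garp (hω : 0 < ω) (ha : ∀ p q, 0 < a p q)
    (hG : ∀ μ : ι → ℝ, (∀ t, 0 < μ t) → ∀ t s,
      Relation.TransGen (fun p q => ω * (μ q * a p q) ≤ μ p * a p p) t s →
        μ s * a s s ≤ ω * (μ t * a s t))
    (c : List ι) (hne : c ≠ []) (hch : List.Chain' (· ≠ ·) c) :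
    ω⁻¹ ^ c.length * ownL a c ≤ ccrossL a c := by
  obtain ⟨t, l, rfl⟩ := List.exists_cons_of_ne_nil hne
  have hω1 : 1 ≤ ω := by
    by_contra hlt
    push_neg at hlt
    have hr : ω * ((fun _ : ι => (1:ℝ)) t * a t t) ≤ (fun _ : ι => (1:ℝ)) t * a t t := by
      simp only [one_mul]
      nlinarith [ha t t]
    have := hG (fun _ => 1) (fun _ => one_pos) t t (Relation.TransGen.single hr)
    simp only [one_mul] at this
    nlinarith [ha t t]
  exact harp_of_garp_aux hω hω1 ha hG (t :: l).length _ le_rfl (by simp) hch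

lemma garp_of_harp (hω : 0 < ω) (ha : ∀ p q, 0 < a p q)
    (hH : ∀ c : List ι, c ≠ [] → List.Chain' (· ≠ ·) c →
      ω⁻¹ ^ c.length * ownL a c ≤ ccrossL a c)
    (μ : ι → ℝ) (hμ : ∀ t, 0 < μ t) (t s : ι)
    (hts : Relation.TransGen (fun p q => ω * (μ q * a p q) ≤ μ p * a p p) t s) :
    μ s * a s s ≤ ω * (μ t * a s t) := by
  have hω1 : 1 ≤ ω := by
    have h1 := hH [t] (by simp) (List.IsChain.singleton _)
    simp only [List.length_cons, List.length_nil, zero_add, pow_one, ownL, ccrossL, pchain,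
      List.map_cons, List.map_nil, List.prod_cons, List.prod_nil, List.nil_append,
      mul_one] at h1
    have h2 : a t t ≤ ω * a t t := by
      calc a t t = ω * (ω⁻¹ * a t t) := by field_simp
        _ ≤ ω * a t t := mul_le_mul_of_nonneg_left h1 hω.le
    nlinarith [ha t t]
  obtain ⟨l₀, hne₀, hch₀, hlast₀⟩ := transGen_exists_chain hts
  obtain ⟨l, hch, hne, hlast⟩ := dedup_chain l₀ t hch₀
  have hlast' : (t :: l).getLast (by simp) = s := hlast.trans hlast₀
  cases l with
  | nil =>
      have hts' : t = s := by simpa using hlast'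
      subst hts'
      nlinarith [mul_pos (hμ t) (ha t t)]
  | cons v l' =>
      set L : List ι := v :: l' with hL
      have hlen : (t :: L).length = L.length + 1 := rfl
      have hcp := chainprod hω ha hμ L t hch
      rw [hlast'] at hcp
      have hH' := hH (t :: L) (by simp) hne
      have hccr : ccrossL a (t :: L) = pchain a t L * a s t := by
        show pchain a t (L ++ [t]) = _
        rw [pchain_concat, hlast']
      rw [hccr, hlen] at hH'
      set O := ownL a (t :: L) with hO
      set pc := pchain a t L with hpc
      have hOpos : 0 < O := ownL_pos ha _
      have hpcpos : 0 < pc := pchain_pos ha L t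
      -- from hH' : ω⁻¹^(L.length+1) * O ≤ pc * a s t
      have hkey : O ≤ ω ^ (L.length + 1) * (pc * a s t) := by
        calc O = ω ^ (L.length + 1) * (ω⁻¹ ^ (L.length + 1) * O) := by
              rw [← mul_assoc, ← mul_pow, mul_inv_cancel₀ (ne_of_gt hω), one_pow, one_mul]
          _ ≤ ω ^ (L.length + 1) * (pc * a s t) := by
              apply mul_le_mul_of_nonneg_left hH'; positivity
      have hfin : (μ s * a s s) * O ≤ (ω * (μ t * a s t)) * O := by
        calc (μ s * a s s) * O
            ≤ (μ s * a s s) * (ω ^ (L.length + 1) * (pc * a s t)) :=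
              mul_le_mul_of_nonneg_left hkey (mul_pos (hμ s) (ha s s)).le
          _ = (ω * a s t) * (ω ^ L.length * (μ s * pc * a s s)) := by
              rw [pow_succ]; ring
          _ ≤ (ω * a s t) * (μ t * O) :=
              mul_le_mul_of_nonneg_left hcp (mul_pos hω (ha s t)).le
          _ = (ω * (μ t * a s t)) * O := by ring
      exact le_of_mul_le_mul_right hfin hOpos
end Main

section Translate
variable {ι : Type*} {a : ι → ι → ℝ}

lemma pchain_ofFn (a : ι → ι → ℝ) : ∀ (k : ℕ) (τ : Fin (k + 1) → ι),
    pchain a (τ 0) (List.ofFn fun i : Fin k => τ i.succ)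
      = ∏ i : Fin k, a (τ i.castSucc) (τ i.succ)
  | 0, τ => by simp [pchain]
  | k + 1, τ => by
      have ih := pchain_ofFn a k (fun i : Fin (k + 1) => τ i.succ)
      rw [List.ofFn_succ]
      simp only [pchain]
      rw [ih, Fin.prod_univ_succ]
      simp [Fin.succ_castSucc, -Fin.castSucc_succ]

lemma getLast_ofFn_last (k : ℕ) (τ : Fin (k + 1) → ι) :
    (List.ofFn τ).getLast (by simp) = τ (Fin.last k) := by
  rw [List.getLast_eq_getElem]
  rw [List.getElem_ofFn]
  congr 1
  ext
  simp [Fin.last]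

lemma ownL_ofFn (k : ℕ) (τ : Fin (k + 1) → ι) :
    ownL a (List.ofFn τ) = ∏ i, a (τ i) (τ i) := by
  rw [Fin.prod_univ_succ]
  simp [ownL, List.map_ofFn, List.prod_ofFn, Function.comp]

lemma castSucc_add_one {k : ℕ} (i : Fin k) : (i.castSucc : Fin (k + 1)) + 1 = i.succ := by
  ext
  simp [Fin.add_def, Nat.mod_eq_of_lt (by omega : (i : ℕ) + 1 < k + 1)]

lemma ccrossL_ofFn (k : ℕ) (τ : Fin (k + 1) → ι) :
    ccrossL a (List.ofFn τ) = ∏ i, a (τ i) (τ (i + 1)) := by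
  have h1 : List.ofFn τ = τ 0 :: List.ofFn fun i : Fin k => τ i.succ := List.ofFn_succ (f := τ)
  rw [h1]
  show pchain a (τ 0) ((List.ofFn fun i : Fin k => τ i.succ) ++ [τ 0]) = _
  have h2 : (τ 0 :: List.ofFn fun i : Fin k => τ i.succ).getLast (by simp) = τ (Fin.last k) := by
    have e2 := congrArg List.getLast? h1.symm
    rw [List.getLast?_eq_getLast (by simp), List.getLast?_eq_getLast (by simp)] at e2
    exact (Option.some.inj e2).trans (getLast_ofFn_last k τ)
  rw [pchain_concat, h2, pchain_ofFn,
    Fin.prod_univ_castSucc (f := fun i => a (τ i) (τ (i + 1)))]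
  congr 1
  · exact Finset.prod_congr rfl fun i _ => by rw [castSucc_add_one]
  · rw [Fin.last_add_one]

lemma chain'_ofFn_iff (k : ℕ) (τ : Fin (k + 1) → ι) :
    List.Chain' (· ≠ ·) (List.ofFn τ) ↔ ∀ i : Fin k, τ i.castSucc ≠ τ i.succ := by
  show List.IsChain _ _ ↔ _
  rw [List.isChain_iff_getElem]
  constructor
  · intro h i
    have hi : (i : ℕ) + 1 < (List.ofFn τ).length := by simp
    have := h i hi
    rw [List.getElem_ofFn, List.getElem_ofFn] at this
    convert this using 2 <;> ext <;> simp
  · intro h i hi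
    rw [List.getElem_ofFn, List.getElem_ofFn]
    have hik : i < k := by simpa using hi
    have := h ⟨i, hik⟩
    convert this using 2 <;> ext <;> simp
end Translate

section Glue

lemma dotp_smul' {ι : Type*} [Fintype ι] (P X : ι → ℝ) (c : ℝ) :
    dotp P (c • X) = c * dotp P X := by
  unfold dotp
  rw [Finset.mul_sum]
  refine Finset.sum_congr rfl fun i _ => ?_
  simp [smul_eq_mul]
  ring

lemma dotp_pos' {ι : Type*} [Fintype ι] {P X : ι → ℝ} (hP : ∀ i, 0 < P i)
    (hX : X ∈ Rplus ι) : 0 < dotp P X := by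
  obtain ⟨hle, hne⟩ := hX
  obtain ⟨i, hi⟩ := Function.ne_iff.1 hne
  refine Finset.sum_pos' (fun j _ => mul_nonneg (hP j).le (hle j)) ?_
  refine ⟨i, Finset.mem_univ i, mul_pos (hP i) ?_⟩
  exact lt_of_le_of_ne (hle i) (Ne.symm (by simpa using hi))

lemma ofFn_get_cast {ι : Type*} (c : List ι) (k : ℕ) (h : c.length = k) :
    List.ofFn (fun i : Fin k => c.get (Fin.cast h.symm i)) = c := by
  subst h
  exact List.ofFn_get c

lemma harpw_iff_list {m T : ℕ} (ω : ℝ) (P X : Fin T → Fin m → ℝ) :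
    HARPw ω P X ↔ ∀ c : List (Fin T), c ≠ [] → List.Chain' (· ≠ ·) c →
      ω⁻¹ ^ c.length * ownL (fun t s => dotp (P t) (X s)) c
        ≤ ccrossL (fun t s => dotp (P t) (X s)) c := by
  set a : Fin T → Fin T → ℝ := fun t s => dotp (P t) (X s) with ha
  constructor
  · intro hH c hne hch
    obtain ⟨h, l, rfl⟩ := List.exists_cons_of_ne_nil hne
    set k := l.length with hk
    have hlen : (h :: l).length = k + 1 := by simp [hk]
    set τ : Fin (k + 1) → Fin T := fun i => (h :: l).get (Fin.cast hlen.symm i) with hτ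
    have hofn : List.ofFn τ = h :: l := ofFn_get_cast (h :: l) (k + 1) hlen
    have hd : ∀ i : Fin k, τ i.castSucc ≠ τ i.succ :=
      (chain'_ofFn_iff k τ).1 (hofn ▸ hch)
    have := hH k τ hd
    rw [← ownL_ofFn (a := a) k τ, ← ccrossL_ofFn (a := a) k τ, hofn] at this
    simpa [hlen] using this
  · intro hL k τ hd
    have hne : List.ofFn τ ≠ [] := by
      rw [List.ofFn_succ]; exact List.cons_ne_nil _ _
    have := hL (List.ofFn τ) hne ((chain'_ofFn_iff k τ).2 hd)
    rw [ownL_ofFn (a := a) k τ, ccrossL_ofFn (a := a) k τ, List.length_ofFn] at this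
    exact this

end Glue

/-- A trade statistics satisfies HARP(ω) iff every rescaling of its consumption
data satisfies GARP(ω). -/
theorem harpw_iff_forall_rescaling_garpw {m T : ℕ} (ω : ℝ) (hω : 0 < ω)
    (P X : Fin T → Fin m → ℝ)
    (hP : ∀ t i, 0 < P t i) (hX : ∀ t, X t ∈ Rplus (Fin m)) :
    HARPw ω P X ↔
    ∀ μ : Fin T → ℝ, (∀ t, 0 < μ t) → GARPw ω P (fun t => μ t • X t) := by
  classical
  set a : Fin T → Fin T → ℝ := fun t s => dotp (P t) (X s) with ha
  have hapos : ∀ p q, 0 < a p q := fun p q => dotp_pos' (hP p) (hX q)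
  rw [harpw_iff_list]
  constructor
  · intro hH μ hμ t s hts
    have hrel : (fun p q : Fin T => ω * dotp (P p) ((fun u => μ u • X u) q)
        ≤ dotp (P p) ((fun u => μ u • X u) p))
        = fun p q => ω * (μ q * a p q) ≤ μ p * a p p := by
      funext p q
      rw [dotp_smul', dotp_smul']
    rw [hrel] at hts
    have := garp_of_harp hω hapos hH μ hμ t s hts
    show dotp (P s) (μ s • X s) ≤ ω * dotp (P s) (μ t • X t)
    rw [dotp_smul', dotp_smul']
    exact this
  · intro hG
    refine harp_of_garp hω hapos ?_
    intro μ hμ t s hts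
    have hrel : (fun p q : Fin T => ω * dotp (P p) ((fun u => μ u • X u) q)
        ≤ dotp (P p) ((fun u => μ u • X u) p))
        = fun p q => ω * (μ q * a p q) ≤ μ p * a p p := by
      funext p q
      rw [dotp_smul', dotp_smul']
    have := hG μ hμ t s (by rw [hrel]; exact hts)
    rw [dotp_smul', dotp_smul'] at this
    exact this
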